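/- arXiv:2604.04566 — 4 statements merged into one kernel-verified Lean document; each statement's English description precedes it below -/
import Mathlib

section
/- Frisch's identity: for integers n ≥ 0 and b ≥ c > 0, the sum over k from 0 to n of (-1)^k C(n,k) / C(b+k, c) equals (c/(n+c)) · 1/C(n+b, b-c). -/
theorem frisch_identity (n b c : ℕ) (hcb : c ≤ b) (hc : 0 < c) :
    ∑ k ∈ Finset.range (n + 1),
        (-1 : ℚ) ^ k * (n.choose k) / ((b + k).choose c) =
      ((c : ℚ) / (n + c)) * (1 / ((n + b).choose (b - c))) := by
  induction n generalizing b with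
  | zero =>
    have h := Nat.choose_symm hcb
    simp [h, div_self (show (c:ℚ) ≠ 0 by positivity)]
  | succ n ih =>
    have hA := ih b hcb
    have hB := ih (b+1) (hcb.trans (Nat.le_succ b))
    have hsplit : ∑ k ∈ Finset.range (n + 1 + 1),
        (-1 : ℚ) ^ k * ((n+1).choose k) / ((b + k).choose c)
      = (∑ k ∈ Finset.range (n + 1), (-1:ℚ)^k * (n.choose k) / ((b + k).choose c))
        - ∑ k ∈ Finset.range (n + 1), (-1:ℚ)^k * (n.choose k) / ((b + 1 + k).choose c) := by
      rw [Finset.sum_range_succ' (fun k => (-1:ℚ)^k * ((n+1).choose k) / ((b + k).choose c))]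
      have key : ∀ i, (-1:ℚ)^(i+1) * ((n+1).choose (i+1)) / ((b + (i+1)).choose c)
          = (-1:ℚ)^(i+1) * (n.choose (i+1)) / ((b + (i+1)).choose c)
            - (-1:ℚ)^i * (n.choose i) / ((b + 1 + i).choose c) := by
        intro i
        rw [Nat.choose_succ_succ]
        have hbi : b + (i+1) = b + 1 + i := by ring
        rw [hbi]
        push_cast
        ring
      simp only [key]
      rw [Finset.sum_sub_distrib]
      have h2 : (∑ i ∈ Finset.range (n+1), (-1:ℚ)^(i+1) * (n.choose (i+1)) / ((b + (i+1)).choose c))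
           + (-1:ℚ)^0 * ((n.choose 0 : ℕ) : ℚ) / (((b + 0).choose c : ℕ) : ℚ)
           = ∑ k ∈ Finset.range (n + 1), (-1:ℚ)^k * (n.choose k) / ((b + k).choose c) := by
        rw [← Finset.sum_range_succ' (fun k => (-1:ℚ)^k * (n.choose k) / ((b + k).choose c)) (n+1),
            Finset.sum_range_succ]
        simp
      simp only [Nat.choose_zero_right] at h2 ⊢
      linarith [h2]
    rw [hsplit, hA, hB]
    set M := n + b with hM
    set j := b - c with hj
    have hb1c : b + 1 - c = j + 1 := by omega
    have hMj : (n + (b+1)) = M + 1 := by omega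
    rw [hb1c, hMj, show n + 1 + b = M + 1 from by omega]
    have hjM : j ≤ M := by omega
    have hX : (M.choose j : ℚ) ≠ 0 := Nat.cast_ne_zero.mpr (Nat.choose_pos hjM).ne'
    have hZ : ((M+1).choose j : ℚ) ≠ 0 := Nat.cast_ne_zero.mpr (Nat.choose_pos (by omega)).ne'
    have hY : ((M+1).choose (j+1) : ℚ) ≠ 0 := Nat.cast_ne_zero.mpr (Nat.choose_pos (by omega)).ne'
    have h1 : (M.choose j : ℚ) * (M+1) = ((M+1).choose j : ℚ) * (n + c + 1) := by
      have := Nat.choose_mul_succ_eq M j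
      have hs : M + 1 - j = n + c + 1 := by omega
      rw [hs] at this
      exact_mod_cast this
    have h2 : ((M+1) : ℚ) * (M.choose j : ℚ) = ((M+1).choose (j+1) : ℚ) * (j+1) := by
      exact_mod_cast Nat.add_one_mul_choose_eq M j
    have hnc : ((n:ℚ) + c) ≠ 0 := by positivity
    have hnc1 : ((n:ℚ) + c + 1) ≠ 0 := by positivity
    have hM1 : ((M:ℚ) + 1) ≠ 0 := by positivity
    have hcast : ((n:ℚ) + 1 + c) = (n + c + 1 : ℚ) := by ring
    have hMeq : (M:ℚ) = j + n + c := by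
      have : M = j + n + c := by omega
      exact_mod_cast this
    rw [hMeq] at h1 h2
    push_cast
    field_simp
    linear_combination (-(((M+1).choose (j+1) : ℚ) - (M.choose j : ℚ)))*h1 + (-(M.choose j : ℚ))*h2
end

section
/- For integers n ≥ 0 and b ≥ c > 0, the sum S_n(b,c) = Σ_{k=0}^n (-1)^k C(n,k)/C(b+k,c) equals (b+1) · (n+c)! (b-c)! / (n+b+1)! − n · (n+c-1)! (b-c+1)! / (n+b+1)!. -/
open Finset Nat in
lemma frisch_rec (c b n : ℕ) :
    ∑ k ∈ range (n+2), (-1:ℚ)^k * ((n+1).choose k) / ((b+k).choose c)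
    = ∑ k ∈ range (n+1), (-1:ℚ)^k * (n.choose k) / ((b+k).choose c)
      - ∑ k ∈ range (n+1), (-1:ℚ)^k * (n.choose k) / ((b+1+k).choose c) := by
  rw [Finset.sum_range_succ']
  have hsplit : ∀ i ∈ range (n+1),
      (-1:ℚ)^(i+1) * ((n+1).choose (i+1)) / ((b+(i+1)).choose c)
      = (-1:ℚ)^(i+1) * (n.choose (i+1)) / ((b+(i+1)).choose c)
        + (-(-1:ℚ)^i * (n.choose i) / ((b+1+i).choose c)) := by
    intro i _
    have h : ((n+1).choose (i+1) : ℚ) = n.choose i + n.choose (i+1) := by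
      exact_mod_cast Nat.choose_succ_succ n i
    rw [h, show b + (i+1) = b + 1 + i by ring]
    ring
  rw [Finset.sum_congr rfl hsplit, Finset.sum_add_distrib]
  have h1 : ∑ i ∈ range (n+1), (-(-1:ℚ)^i * (n.choose i) / ((b+1+i).choose c))
      = - ∑ i ∈ range (n+1), (-1:ℚ)^i * (n.choose i) / ((b+1+i).choose c) := by
    rw [← Finset.sum_neg_distrib]
    exact Finset.sum_congr rfl fun i _ => by ring
  have h2 := Finset.sum_range_succ'
    (fun k => (-1:ℚ)^k * (n.choose k) / ((b+k).choose c)) (n+1)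
  have h3 := Finset.sum_range_succ
    (fun k => (-1:ℚ)^k * (n.choose k) / ((b+k).choose c)) (n+1)
  simp only [Nat.choose_succ_self, Nat.cast_zero, mul_zero, zero_div, add_zero,
    Nat.choose_zero_right, Nat.cast_one, mul_one, pow_zero, one_mul, add_zero] at h2 h3
  rw [h1]
  simp only [Nat.choose_zero_right, Nat.cast_one, mul_one, pow_zero, one_mul, Nat.add_zero]
  rw [h3] at h2
  linarith [h2]

open Finset Nat in
lemma frisch_aux (m : ℕ) : ∀ n d : ℕ,
    ∑ k ∈ range (n+1), (-1:ℚ)^k * (n.choose k) / ((m+1+d+k).choose (m+1))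
    = ((m:ℚ)+d+2) * ((n+m+1)! * d !) / (n+m+d+2)!
      - (n:ℚ) * ((n+m)! * (d+1)!) / (n+m+d+2)! := by
  intro n
  induction n with
  | zero =>
    intro d
    simp only [zero_add, Nat.cast_zero, zero_mul, zero_div, sub_zero]
    rw [Finset.sum_range_one]
    simp only [pow_zero, Nat.choose_zero_right, Nat.cast_one, one_mul, Nat.add_zero]
    rw [Nat.cast_choose ℚ (show m+1 ≤ m+1+d by omega)]
    have h1 : m + 1 + d - (m + 1) = d := by omega
    have h2 : m + 1 + d = m + d + 1 := by omega
    rw [h1, h2]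
    have e1 : ((m+d+2)! : ℚ) = (m+d+2) * (m+d+1)! := by
      rw [show m+d+2 = (m+d+1)+1 from rfl, Nat.factorial_succ]; push_cast; ring
    rw [e1]
    have f1 : ((m+d+1)! : ℚ) ≠ 0 := by exact_mod_cast Nat.factorial_ne_zero _
    have f2 : ((m+1)! : ℚ) ≠ 0 := by exact_mod_cast Nat.factorial_ne_zero _
    have f3 : ((d)! : ℚ) ≠ 0 := by exact_mod_cast Nat.factorial_ne_zero _
    have f4 : ((m:ℚ)+d+2) ≠ 0 := by positivity
    field_simp
  | succ n ih =>
    intro d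
    rw [show n+1+1 = n+2 from rfl, frisch_rec (m+1) (m+1+d) n, ih d]
    have h2 := ih (d+1)
    rw [← add_assoc (m+1) d 1] at h2
    rw [h2]
    have e1 : ((n+1+m+1)! : ℚ) = (n+m+2) * ((n+m+1) * (n+m)!) := by
      rw [show n+1+m+1 = (n+m+1)+1 by omega, Nat.factorial_succ,
        show n+m+1 = (n+m)+1 from rfl, Nat.factorial_succ]
      push_cast; ring
    have e2 : ((n+m+1)! : ℚ) = (n+m+1) * (n+m)! := by
      rw [show n+m+1 = (n+m)+1 from rfl, Nat.factorial_succ]; push_cast; ring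
    have e3 : ((n+1+m)! : ℚ) = (n+m+1) * (n+m)! := by
      rw [show n+1+m = (n+m)+1 by omega, Nat.factorial_succ]; push_cast; ring
    have e4 : ((n+1+m+d+2)! : ℚ) = (n+m+d+3) * (n+m+d+2)! := by
      rw [show n+1+m+d+2 = (n+m+d+2)+1 by omega, Nat.factorial_succ]; push_cast; ring
    have e5 : ((n+m+(d+1)+2)! : ℚ) = (n+m+d+3) * (n+m+d+2)! := by
      rw [show n+m+(d+1)+2 = (n+m+d+2)+1 by omega, Nat.factorial_succ]; push_cast; ring
    have e6 : (((d+1))! : ℚ) = (d+1) * d ! := by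
      rw [Nat.factorial_succ]; push_cast; ring
    have e7 : (((d+1)+1)! : ℚ) = (d+2) * ((d+1) * d !) := by
      rw [Nat.factorial_succ, Nat.factorial_succ]; push_cast; ring
    push_cast
    rw [e1, e2, e3, e4, e5, e6, e7]
    have f1 : ((n+m+d+2)! : ℚ) ≠ 0 := by exact_mod_cast Nat.factorial_ne_zero _
    have f2 : ((n+m)! : ℚ) ≠ 0 := by exact_mod_cast Nat.factorial_ne_zero _
    have f3 : ((d)! : ℚ) ≠ 0 := by exact_mod_cast Nat.factorial_ne_zero _
    have f4 : ((n:ℚ)+m+d+3) ≠ 0 := by positivity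
    field_simp
    ring

theorem frisch_factorial_form (n b c : ℕ) (hcb : c ≤ b) (hc : 0 < c) :
    ∑ k ∈ Finset.range (n + 1),
        (-1 : ℚ) ^ k * (n.choose k) / ((b + k).choose c) =
      ((b : ℚ) + 1) * (Nat.factorial (n + c) * Nat.factorial (b - c)) /
          Nat.factorial (n + b + 1) -
        (n : ℚ) * (Nat.factorial (n + c - 1) * Nat.factorial (b - c + 1)) /
          Nat.factorial (n + b + 1) := by
  obtain ⟨m, rfl⟩ : ∃ m, c = m + 1 := ⟨c - 1, by omega⟩
  obtain ⟨d, rfl⟩ : ∃ d, b = m + 1 + d := ⟨b - (m+1), by omega⟩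
  have h := frisch_aux m n d
  rw [h]
  have g1 : m + 1 + d - (m + 1) = d := by omega
  have g2 : n + (m + 1) = n + m + 1 := by omega
  have g3 : n + (m + 1) - 1 = n + m := by omega
  have g4 : n + (m + 1 + d) + 1 = n + m + d + 2 := by omega
  rw [g1, g3, g2, g4]
  push_cast
  ring
end

section
/- For integers n ≥ 0, b ≥ c > 0, and any real x, the parametric sum S_n(b,c;x) = Σ_{k=0}^n (-1)^k C(n,k) x^k / C(b+k,c) equals the integral over [0,1] of t^c (1-t)^(b-c) [ (b+1)(1 - x(1-t))^n − n x (1-t)(1 - x(1-t))^(n-1) ] dt, where for n = 0 the second bracketed term is interpreted as 0. -/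
lemma intble (a m : ℕ) : IntervalIntegrable (fun t : ℝ => t ^ a * (1 - t) ^ m) MeasureTheory.volume 0 1 := by
  apply Continuous.intervalIntegrable; fun_prop

lemma beta_nat : ∀ (m a : ℕ), (∫ t in (0:ℝ)..1, t ^ a * (1 - t) ^ m) =
    (a.factorial * m.factorial : ℝ) / (a + m + 1).factorial := by
  intro m
  induction m with
  | zero =>
    intro a
    simp only [pow_zero, mul_one, integral_pow, one_pow, Nat.factorial_zero, Nat.cast_one,
      Nat.add_zero, Nat.factorial_succ]
    rw [zero_pow (by omega)]
    have : (a.factorial : ℝ) ≠ 0 := by positivity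
    push_cast
    field_simp
    norm_num
  | succ m ih =>
    intro a
    have hderiv : ∀ t : ℝ, HasDerivAt (fun t : ℝ => t ^ (a+1) * (1 - t) ^ (m+1))
        ((a+1)*(t^a*(1-t)^(m+1)) - (m+1)*(t^(a+1)*(1-t)^m)) t := by
      intro t
      have h1 : HasDerivAt (fun t : ℝ => t ^ (a+1)) ((a+1)*t^a) t := by
        simpa using (hasDerivAt_pow (a+1) t)
      have h2 : HasDerivAt (fun t : ℝ => (1 - t) ^ (m+1)) (-((m+1)*(1-t)^m)) t := by
        have := ((hasDerivAt_pow (m+1) (1 - t)).comp t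
          ((hasDerivAt_const t (1:ℝ)).sub (hasDerivAt_id t)))
        simpa [Function.comp_def] using this
      have : HasDerivAt (fun t : ℝ => t ^ (a+1) * (1 - t) ^ (m+1)) _ t := h1.fun_mul h2
      convert this using 1; ring
    have h0 : (∫ t in (0:ℝ)..1,
        (((a:ℝ)+1)*(t^a*(1-t)^(m+1)) - ((m:ℝ)+1)*(t^(a+1)*(1-t)^m))) = 0 := by
      rw [intervalIntegral.integral_eq_sub_of_hasDerivAt (fun t _ => hderiv t)
        (by apply Continuous.intervalIntegrable; fun_prop)]
      norm_num
    rw [intervalIntegral.integral_sub ((intble a (m+1)).const_mul _)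
      ((intble (a+1) m).const_mul _), intervalIntegral.integral_const_mul,
      intervalIntegral.integral_const_mul, ih (a+1)] at h0
    have ha : ((a:ℝ)+1) ≠ 0 := by positivity
    have h2 : (∫ t in (0:ℝ)..1, t ^ a * (1 - t) ^ (m+1))
        = ((m:ℝ)+1) * ((a+1).factorial * m.factorial / (a+1+m+1).factorial) / ((a:ℝ)+1) := by
      refine eq_div_of_mul_eq ha ?_
      linarith [h0]
    rw [h2, Nat.factorial_succ a, Nat.factorial_succ m,
      show a + (m+1) + 1 = a+1+m+1 by ring]
    have hf : ((a+1+m+1).factorial : ℝ) ≠ 0 := by positivity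
    push_cast
    field_simp

lemma sumA (n : ℕ) (u : ℝ) : (1 - u) ^ n =
    ∑ k ∈ Finset.range (n + 1), (n.choose k : ℝ) * (-u) ^ k := by
  rw [show (1:ℝ) - u = -u + 1 by ring, add_pow]
  exact Finset.sum_congr rfl fun k _ => by ring

lemma sumB (n : ℕ) (u : ℝ) : (n : ℝ) * u * (1 - u) ^ (n - 1) =
    -∑ k ∈ Finset.range (n + 1), (k : ℝ) * (n.choose k : ℝ) * (-u) ^ k := by
  cases n with
  | zero => simp
  | succ m =>
    rw [Finset.sum_range_succ']
    simp only [Nat.cast_zero, zero_mul, pow_zero, add_zero]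
    have : ∀ j ∈ Finset.range (m+1), ((j:ℝ)+1) * ((m+1).choose (j+1) : ℝ) * (-u) ^ (j+1)
        = -u * (((m:ℝ)+1) * ((m.choose j : ℝ) * (-u) ^ j)) := by
      intro j _
      have h := Nat.add_one_mul_choose_eq m j
      have h' : ((j:ℝ)+1) * ((m+1).choose (j+1) : ℝ) = ((m:ℝ)+1) * (m.choose j : ℝ) := by
        have h2 : ((m.succ * m.choose j : ℕ) : ℝ) = ((m.succ.choose j.succ * j.succ : ℕ) : ℝ) := by
          exact_mod_cast congrArg (Nat.cast (R := ℝ)) h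
        push_cast at h2
        linarith
      calc ((j:ℝ)+1) * ((m+1).choose (j+1) : ℝ) * (-u) ^ (j+1)
          = (((j:ℝ)+1) * ((m+1).choose (j+1) : ℝ)) * (-u) ^ (j+1) := by ring
        _ = (((m:ℝ)+1) * (m.choose j : ℝ)) * (-u) ^ (j+1) := by rw [h']
        _ = -u * (((m:ℝ)+1) * ((m.choose j : ℝ) * (-u) ^ j)) := by ring
    simp only [Nat.add_sub_cancel, Nat.cast_add, Nat.cast_one]
    rw [Finset.sum_congr rfl this, ← Finset.mul_sum, ← Finset.mul_sum, ← sumA]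
    ring

lemma bracket (n : ℕ) (β u : ℝ) : β * (1 - u) ^ n - (n : ℝ) * u * (1 - u) ^ (n - 1) =
    ∑ k ∈ Finset.range (n + 1), (β + k) * (n.choose k : ℝ) * (-u) ^ k := by
  rw [sumA, sumB, Finset.mul_sum, sub_neg_eq_add, ← Finset.sum_add_distrib]
  exact Finset.sum_congr rfl fun k _ => by ring
theorem parametric_integral_representation (n b c : ℕ) (hcb : c ≤ b) (hc : 0 < c) (x : ℝ) :
    ∑ k ∈ Finset.range (n + 1),
        (-1 : ℝ) ^ k * (n.choose k) * x ^ k / ((b + k).choose c) =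
      ∫ t in (0:ℝ)..1, t ^ c * (1 - t) ^ (b - c) *
        (((b : ℝ) + 1) * (1 - x * (1 - t)) ^ n -
          (n : ℝ) * x * (1 - t) * (1 - x * (1 - t)) ^ (n - 1)) := by
  have hpt : ∀ t : ℝ, t ^ c * (1 - t) ^ (b - c) *
        (((b : ℝ) + 1) * (1 - x * (1 - t)) ^ n -
          (n : ℝ) * x * (1 - t) * (1 - x * (1 - t)) ^ (n - 1))
      = ∑ k ∈ Finset.range (n + 1),
          (((b:ℝ) + 1 + k) * (n.choose k : ℝ) * (-x) ^ k) * (t ^ c * (1 - t) ^ (b - c + k)) := by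
    intro t
    have hb := bracket n ((b:ℝ)+1) (x * (1 - t))
    rw [show (n:ℝ) * x * (1 - t) * (1 - x * (1 - t)) ^ (n - 1)
        = (n:ℝ) * (x * (1-t)) * (1 - x * (1 - t)) ^ (n - 1) by ring, hb, Finset.mul_sum]
    refine Finset.sum_congr rfl fun k _ => ?_
    rw [show (-(x * (1-t))) ^ k = (-x)^k * (1-t)^k by rw [← neg_mul, mul_pow],
      pow_add]
    ring
  rw [intervalIntegral.integral_congr (fun t _ => hpt t),
    intervalIntegral.integral_finset_sum (fun k _ => (intble c (b - c + k)).const_mul _)]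
  refine Finset.sum_congr rfl fun k _ => ?_
  rw [intervalIntegral.integral_const_mul, beta_nat]
  have hle : c ≤ b + k := le_trans hcb (Nat.le_add_right b k)
  have hch : ((b+k).choose c : ℝ) * c.factorial * ((b+k-c).factorial) = ((b+k).factorial : ℝ) := by
    exact_mod_cast congrArg (Nat.cast (R := ℝ)) (Nat.choose_mul_factorial_mul_factorial hle)
  have h1 : b - c + k = b + k - c := by omega
  have h2 : c + (b + k - c) + 1 = b + k + 1 := by omega
  rw [h1, h2, Nat.factorial_succ (b+k)]
  have hne1 : ((b+k).factorial : ℝ) ≠ 0 := by positivity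
  have hne2 : ((b+k).choose c : ℝ) ≠ 0 := by
    have := Nat.choose_pos hle; positivity
  have hne3 : ((b:ℝ) + k + 1) ≠ 0 := by positivity
  rw [show ((-x)^k : ℝ) = (-1)^k * x^k by rw [neg_pow]]
  push_cast
  field_simp
  linear_combination (-1:ℝ) * x^k * (n.choose k) * ((b:ℝ)+k+1) * hch
end

section
/- For integers n ≥ 0 and b ≥ c > 0, the parametric sum S_n(b,c;x) evaluated at x = 1 equals (c/(n+c)) / C(n+b, b-c). -/
open Finset

private lemma frisch (c : ℕ) (hc : 0 < c) :
    ∀ n b : ℕ, c ≤ b →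
      ∑ k ∈ Finset.range (n + 1), (-1 : ℝ) ^ k * (n.choose k) / ((b + k).choose c) =
        ((c : ℝ) / (n + c)) / ((n + b).choose (b - c)) := by
  intro n
  induction n with
  | zero =>
    intro b hcb
    simp only [Finset.sum_range_one, pow_zero, Nat.choose_zero_right, Nat.cast_one,
      one_mul, Nat.cast_zero, zero_add, Nat.zero_add, Nat.add_zero]
    rw [Nat.choose_symm hcb, div_self (by exact_mod_cast hc.ne' : (c : ℝ) ≠ 0)]
  | succ n ih =>
    intro b hcb
    have hsplit :
        ∑ k ∈ Finset.range (n + 1 + 1), (-1 : ℝ) ^ k * ((n+1).choose k) / ((b + k).choose c)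
          = (∑ k ∈ Finset.range (n + 1), (-1 : ℝ) ^ k * (n.choose k) / ((b + k).choose c))
            - ∑ k ∈ Finset.range (n + 1), (-1 : ℝ) ^ k * (n.choose k) / (((b+1) + k).choose c) := by
      rw [Finset.sum_range_succ']
      have hps : ∀ i : ℕ, (((n+1).choose (i+1) : ℝ)) = n.choose i + n.choose (i+1) := by
        intro i
        exact_mod_cast congrArg Nat.cast (Nat.choose_succ_succ n i)
      have hc2 : ∀ i ∈ Finset.range (n+1),
          (-1 : ℝ) ^ (i+1) * ((n+1).choose (i+1)) / ((b + (i+1)).choose c)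
            = -((-1 : ℝ) ^ i * (n.choose i) / (((b+1) + i).choose c))
              + (-1 : ℝ) ^ (i+1) * (n.choose (i+1)) / ((b + (i+1)).choose c) := by
        intro i _
        rw [hps i]
        have hbb : b + (i + 1) = (b + 1) + i := by ring
        rw [hbb]
        ring
      rw [Finset.sum_congr rfl hc2, Finset.sum_add_distrib]
      have htail :
          (∑ i ∈ Finset.range (n+1),
              (-1 : ℝ) ^ (i+1) * (n.choose (i+1)) / ((b + (i+1)).choose c))
            + (-1 : ℝ) ^ 0 * ((n : ℕ).choose 0 : ℝ) / ((b + 0).choose c)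
          = ∑ k ∈ Finset.range (n + 1), (-1 : ℝ) ^ k * (n.choose k) / ((b + k).choose c) := by
        rw [← Finset.sum_range_succ'
            (fun k => (-1 : ℝ) ^ k * (n.choose k) / ((b + k).choose c)) (n+1),
          Finset.sum_range_succ]
        simp [Nat.choose_succ_self]
      simp only [Finset.sum_neg_distrib]
      simp only [pow_zero, Nat.choose_zero_right, Nat.cast_one, one_mul] at htail ⊢
      linarith [htail]
    rw [hsplit, ih b hcb, ih (b+1) (hcb.trans (Nat.le_succ b))]
    have h2 : b + 1 - c = b - c + 1 := by omega
    have hA : ((n + b).choose (b - c) : ℝ) * (n + b + 1)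
        = ((n + b + 1).choose (b - c)) * (n + c + 1) := by
      have h := Nat.choose_mul_succ_eq (n + b) (b - c)
      have h3 : n + b + 1 - (b - c) = n + c + 1 := by omega
      rw [h3] at h
      exact_mod_cast congrArg Nat.cast h
    have hB : ((n + b + 1).choose (b - c + 1) : ℝ) * ((b - c : ℕ) + 1)
        = ((n + b + 1).choose (b - c)) * (n + c + 1) := by
      have h := Nat.choose_succ_right_eq (n + b + 1) (b - c)
      have h3 : n + b + 1 - (b - c) = n + c + 1 := by omega
      rw [h3] at h
      exact_mod_cast congrArg Nat.cast h
    have hYpos : (0 : ℝ) < ((n + b + 1).choose (b - c) : ℝ) := by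
      exact_mod_cast Nat.choose_pos (by omega)
    have hXpos : (0 : ℝ) < ((n + b).choose (b - c) : ℝ) := by
      exact_mod_cast Nat.choose_pos (by omega)
    have hZpos : (0 : ℝ) < ((n + b + 1).choose (b - c + 1) : ℝ) := by
      exact_mod_cast Nat.choose_pos (by omega)
    have hccast : (0 : ℝ) < (c : ℝ) := by exact_mod_cast hc
    have hnc : (0 : ℝ) < (n : ℝ) + c := by positivity
    have hnc1 : (0 : ℝ) < (n : ℝ) + 1 + c := by positivity
    have hcast : ((b - c : ℕ) : ℝ) = (b : ℝ) - c := by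
      exact Nat.cast_sub hcb
    have e1 : n + (b + 1) = n + b + 1 := by ring
    have e2 : n + 1 + b = n + b + 1 := by ring
    rw [e1, e2, h2]
    push_cast
    simp only [div_div]
    rw [div_sub_div _ _ (by positivity) (by positivity),
      div_eq_div_iff (by positivity) (by positivity)]
    linear_combination
      (-(c : ℝ) * ((n : ℝ) + c) * ((n + b + 1).choose (b - c + 1) : ℝ)) * hA
      + ((c : ℝ) * ((n : ℝ) + c) * ((n + b).choose (b - c) : ℝ)) * hB
      - ((c : ℝ) * ((n : ℝ) + c) * ((n + b).choose (b - c) : ℝ)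
          * ((n + b + 1).choose (b - c + 1) : ℝ)) * hcast

theorem parametric_sum_at_one (n b c : ℕ) (hcb : c ≤ b) (hc : 0 < c) :
    ∑ k ∈ Finset.range (n + 1),
        (-1 : ℝ) ^ k * (n.choose k) * (1 : ℝ) ^ k / ((b + k).choose c) =
      ((c : ℝ) / (n + c)) / ((n + b).choose (b - c)) := by
  simp only [one_pow, mul_one]
  exact frisch c hc n b hcb
end
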